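/- arXiv:math/0608185 — 9 statements merged into one kernel-verified Lean document; each statement's English description precedes it below -/
import Mathlib

section
/- In any Heron triangle, the smallest side is at least 3. -/
lemma heron_side_key (a b c S : ℕ)
    (ha : 0 < a) (hb : 0 < b) (hc : 0 < c)
    (h1 : a < b + c) (h2 : b < a + c) (h3 : c < a + b)
    (hS : 0 < S)
    (hheron : 16 * (S : ℤ) ^ 2 =
      ((a : ℤ) + b + c) * (-(a : ℤ) + b + c) * ((a : ℤ) - b + c) * ((a : ℤ) + b - c)) :
    3 ≤ a := by
  by_contra h
  push_neg at h
  interval_cases a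
  · -- a = 1 : then b = c
    have hbc : b = c := by omega
    subst hbc
    have hz : (16 * S ^ 2 + 1 : ℤ) = 4 * (b : ℤ) ^ 2 := by
      push_cast at hheron ⊢
      linear_combination hheron
    have hn : 16 * S ^ 2 + 1 = 4 * b ^ 2 := by exact_mod_cast hz
    set m := S ^ 2 with hm
    set n := b ^ 2 with hn2
    omega
  · -- a = 2
    have hcase : b = c ∨ c = b + 1 ∨ b = c + 1 := by omega
    rcases hcase with rfl | rfl | rfl
    · -- b = c
      have hz : (16 * S ^ 2 + 16 : ℤ) = 16 * (b : ℤ) ^ 2 := by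
        push_cast at hheron ⊢
        linear_combination hheron
      have hn : S ^ 2 + 1 = b ^ 2 := by
        have : 16 * S ^ 2 + 16 = 16 * b ^ 2 := by exact_mod_cast hz
        omega
      have hb2 : 2 ≤ b := by omega
      have hSb : S < b := by
        have : S ^ 2 < b ^ 2 := by omega
        exact lt_of_pow_lt_pow_left₀ 2 (Nat.zero_le _) this
      have : S + 1 ≤ b := hSb
      nlinarith
    · -- c = b + 1
      have hz : (16 * S ^ 2 + 9 : ℤ) = 12 * (b : ℤ) ^ 2 + 12 * b := by
        push_cast at hheron ⊢
        linear_combination hheron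
      have hn : 16 * S ^ 2 + 9 = 12 * b ^ 2 + 12 * b := by exact_mod_cast hz
      set m := S ^ 2
      set n := b ^ 2
      omega
    · -- b = c + 1
      have hz : (16 * S ^ 2 + 9 : ℤ) = 12 * (c : ℤ) ^ 2 + 12 * c := by
        push_cast at hheron ⊢
        linear_combination hheron
      have hn : 16 * S ^ 2 + 9 = 12 * c ^ 2 + 12 * c := by exact_mod_cast hz
      set m := S ^ 2
      set n := c ^ 2
      omega

/-- In any Heron triangle, the smallest side is at least `3`. -/
theorem heron_min_side_ge_three (a b c S : ℕ)
    (ha : 0 < a) (hb : 0 < b) (hc : 0 < c)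
    (h1 : a < b + c) (h2 : b < a + c) (h3 : c < a + b)
    (hS : 0 < S)
    (hheron : 16 * (S : ℤ) ^ 2 =
      ((a : ℤ) + b + c) * (-(a : ℤ) + b + c) * ((a : ℤ) - b + c) * ((a : ℤ) + b - c)) :
    3 ≤ min a (min b c) := by
  refine le_min (heron_side_key a b c S ha hb hc h1 h2 h3 hS hheron) (le_min ?_ ?_)
  · exact heron_side_key b a c S hb ha hc h2 h1 (by omega) hS (by linear_combination hheron)
  · exact heron_side_key c a b S hc ha hb (by omega) (by omega) (by omega) hS
      (by linear_combination hheron)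
end

section
/- If p and q are odd primes and (p, q, x) is a Heron triangle, then x is even. -/
/-- If `p` and `q` are odd primes and `(p, q, x)` is a Heron triangle, then `x`
is even. -/
theorem heron_third_side_even (p q x S : ℕ)
    (hp : p.Prime) (hq : q.Prime) (hpodd : Odd p) (hqodd : Odd q)
    (hx : 0 < x)
    (h1 : p < q + x) (h2 : q < p + x) (h3 : x < p + q)
    (hS : 0 < S)
    (hheron : 16 * (S : ℤ) ^ 2 =
      ((p : ℤ) + q + x) * (-(p : ℤ) + q + x) * ((p : ℤ) - q + x) * ((p : ℤ) + q - x)) :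
    Even x := by
  rcases Nat.even_or_odd x with h | h
  · exact h
  · exfalso
    obtain ⟨a, ha⟩ := hpodd
    obtain ⟨b, hb⟩ := hqodd
    obtain ⟨c, hc⟩ := h
    have hodd : Odd (((p : ℤ) + q + x) * (-(p : ℤ) + q + x) * ((p : ℤ) - q + x) * ((p : ℤ) + q - x)) := by
      subst ha hb hc
      refine ((Odd.mul ?_ ?_).mul ?_).mul ?_
      · exact ⟨(a : ℤ) + b + c + 1, by push_cast; ring⟩
      · exact ⟨-(a : ℤ) + b + c, by push_cast; ring⟩
      · exact ⟨(a : ℤ) - b + c, by push_cast; ring⟩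
      · exact ⟨(a : ℤ) + b - c, by push_cast; ring⟩
    rw [← hheron] at hodd
    have heven : Even (16 * (S : ℤ) ^ 2) := ⟨8 * (S : ℤ) ^ 2, by ring⟩
    exact (Int.not_odd_iff_even.mpr heven) hodd
end

section
/- If p and q are primes both congruent to 3 modulo 4, then there is no Heron triangle with two sides equal to p and q; i.e., H(p,q) = 0. -/
/-- A Heron triangle: positive integer sides satisfying the strict triangle
inequalities, with positive integer area. -/
def IsHeron (a b c : ℕ) : Prop :=
  0 < a ∧ 0 < b ∧ 0 < c ∧ a < b + c ∧ b < a + c ∧ c < a + b ∧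
  ∃ S : ℕ, 0 < S ∧
    16 * (S : ℤ) ^ 2 =
      ((a : ℤ) + b + c) * (-(a : ℤ) + b + c) * ((a : ℤ) - b + c) * ((a : ℤ) + b - c)

/-- A prime `≡ 3 (mod 4)` dividing a sum of two squares divides both. -/
lemma key_three_mod_four (p : ℕ) (hp : p.Prime) (hp4 : p % 4 = 3) (a b : ℤ)
    (h : (p : ℤ) ∣ a ^ 2 + b ^ 2) : (p : ℤ) ∣ a ∧ (p : ℤ) ∣ b := by
  haveI : Fact p.Prime := ⟨hp⟩
  have h0 : ((a : ZMod p) ^ 2 + (b : ZMod p) ^ 2) = 0 := by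
    have := (ZMod.intCast_zmod_eq_zero_iff_dvd (a ^ 2 + b ^ 2) p).mpr h
    push_cast at this
    exact this
  have hb : (b : ZMod p) = 0 := by
    by_contra hb
    have hsq : IsSquare (-1 : ZMod p) := by
      refine ⟨(a : ZMod p) * ((b : ZMod p))⁻¹, ?_⟩
      have hb2 : ((b : ZMod p)) ^ 2 ≠ 0 := pow_ne_zero 2 hb
      field_simp
      linear_combination -h0
    exact (ZMod.exists_sq_eq_neg_one_iff.mp hsq) hp4
  have ha : (a : ZMod p) = 0 := by
    have : (a : ZMod p) ^ 2 = 0 := by rw [hb] at h0; simpa using h0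
    exact pow_eq_zero_iff (n := 2) (by norm_num) |>.mp this
  exact ⟨(ZMod.intCast_zmod_eq_zero_iff_dvd a p).mp ha,
    (ZMod.intCast_zmod_eq_zero_iff_dvd b p).mp hb⟩

lemma prime_dvd_four_S {p : ℕ} (hp : p.Prime) (hp4 : p % 4 = 3) {S : ℤ}
    (h : (p : ℤ) ∣ 4 * S) : (p : ℤ) ∣ S := by
  have hp' : Prime (p : ℤ) := Nat.prime_iff_prime_int.mp hp
  rcases hp'.dvd_mul.mp h with h4 | hS
  · exfalso
    have h44 : p ∣ 4 := by exact_mod_cast h4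
    have hle := Nat.le_of_dvd (by norm_num) h44
    have : p = 3 := by omega
    rw [this] at h44; norm_num at h44
  · exact hS

/-- If `p ≡ q ≡ 3 (mod 4)` are primes, then there is no Heron triangle with
two sides `p` and `q`. -/
theorem heron_none_of_three_mod_four (p q : ℕ)
    (hp : p.Prime) (hq : q.Prime) (hp4 : p % 4 = 3) (hq4 : q % 4 = 3) :
    {c : ℕ | IsHeron p q c} = ∅ := by
  ext c
  simp only [Set.mem_setOf_eq, Set.mem_empty_iff_false, iff_false]
  rintro ⟨hp0, hq0, hc0, h1, h2, h3, S, hS, hEq⟩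
  set D : ℤ := (p : ℤ) ^ 2 + (q : ℤ) ^ 2 - (c : ℤ) ^ 2 with hD
  have hkey : D ^ 2 + (4 * (S : ℤ)) ^ 2 = 4 * (p : ℤ) ^ 2 * (q : ℤ) ^ 2 := by
    rw [hD]; linear_combination hEq
  -- divide out p
  obtain ⟨hd, hs4⟩ := key_three_mod_four p hp hp4 D (4 * S)
    ⟨4 * (p : ℤ) * (q : ℤ) ^ 2, by linear_combination hkey⟩
  have hs := prime_dvd_four_S hp hp4 hs4
  obtain ⟨d, hd⟩ := hd
  obtain ⟨s, hs⟩ := hs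
  have hpne : ((p : ℤ)) ^ 2 ≠ 0 := pow_ne_zero 2 (by exact_mod_cast hp.ne_zero)
  have hkey2 : d ^ 2 + (4 * s) ^ 2 = 4 * (q : ℤ) ^ 2 := by
    have h2' : (p : ℤ) ^ 2 * (d ^ 2 + (4 * s) ^ 2) = (p : ℤ) ^ 2 * (4 * (q : ℤ) ^ 2) := by
      linear_combination hkey - (D + (p : ℤ) * d) * hd - 16 * ((S : ℤ) + (p : ℤ) * s) * hs
    exact mul_left_cancel₀ hpne h2'
  -- divide out q
  obtain ⟨hd', hs4'⟩ := key_three_mod_four q hq hq4 d (4 * s)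
    ⟨4 * (q : ℤ), by linear_combination hkey2⟩
  have hs' := prime_dvd_four_S hq hq4 hs4'
  obtain ⟨d', hd'⟩ := hd'
  obtain ⟨s', hs'⟩ := hs'
  have hqne : ((q : ℤ)) ^ 2 ≠ 0 := pow_ne_zero 2 (by exact_mod_cast hq.ne_zero)
  have hkey3 : d' ^ 2 + (4 * s') ^ 2 = 4 := by
    have h3' : (q : ℤ) ^ 2 * (d' ^ 2 + (4 * s') ^ 2) = (q : ℤ) ^ 2 * 4 := by
      linear_combination hkey2 - (d + (q : ℤ) * d') * hd' - 16 * (s + (q : ℤ) * s') * hs'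
    exact mul_left_cancel₀ hqne h3'
  -- but s' ≠ 0
  have hSpos : (0 : ℤ) < (S : ℤ) := by exact_mod_cast hS
  have hs'ne : s' ≠ 0 := by
    rintro rfl
    simp at hs'
    rw [hs'] at hs
    simp at hs
    omega
  have h1' : 1 ≤ s' ^ 2 := by
    have := hs'ne
    rcases lt_or_gt_of_ne this with h | h <;> nlinarith
  nlinarith [sq_nonneg d']
end

section
/- If p ≡ 1 (mod 4) is prime, then H(p,p) = 2; that is, there are exactly two positive integers x such that (p, p, x) is a Heron triangle, namely x = 4uv and x = 2|u²-v²| where p = u² + v² with coprime positive integers u ≠ v. -/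
/-- A prime is not a product of two equal naturals. -/
lemma prime_ne_sq {p : ℕ} (hp : p.Prime) (b : ℕ) : p ≠ b * b := by
  intro h
  rcases hp.eq_one_or_self_of_dvd b ⟨b, h⟩ with h1 | h1
  · subst h1; norm_num at h; exact hp.ne_one h
  · subst h1; have := hp.two_le; nlinarith

lemma coprime_of_sq_add_sq {p a b : ℕ} (hp : p.Prime) (h : a ^ 2 + b ^ 2 = p) :
    Nat.Coprime a b := by
  set g := Nat.gcd a b with hg
  have hga : g ∣ a := Nat.gcd_dvd_left a b
  have hgb : g ∣ b := Nat.gcd_dvd_right a b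
  have hg2 : g * g ∣ p := by
    rw [← h]
    exact Dvd.dvd.add (mul_dvd_mul hga hga |>.trans (by rw [← sq]))
      (mul_dvd_mul hgb hgb |>.trans (by rw [← sq]))
  rcases hp.eq_one_or_self_of_dvd _ hg2 with h1 | h1
  · have : g = 1 := by nlinarith
    exact this
  · exact absurd h1.symm (prime_ne_sq hp g)

/-- Uniqueness of the representation of a prime as a sum of two squares. -/
lemma two_squares_unique {p a b c d : ℕ} (hp : p.Prime)
    (ha : 0 < a) (hb : 0 < b) (hc : 0 < c) (hd : 0 < d)
    (h1 : a ^ 2 + b ^ 2 = p) (h2 : c ^ 2 + d ^ 2 = p) :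
    (a = c ∧ b = d) ∨ (a = d ∧ b = c) := by
  have hcab : Nat.Coprime a b := coprime_of_sq_add_sq hp h1
  have hpz : Prime (p : ℤ) := Nat.prime_iff_prime_int.mp hp
  have H1 : (a : ℤ) ^ 2 + (b : ℤ) ^ 2 = p := by exact_mod_cast h1
  have H2 : (c : ℤ) ^ 2 + (d : ℤ) ^ 2 = p := by exact_mod_cast h2
  have key : (p : ℤ) ∣ ((a : ℤ) * c + b * d) * ((a : ℤ) * c - b * d) :=
    ⟨(a : ℤ) ^ 2 - (d : ℤ) ^ 2, by linear_combination (a : ℤ) ^ 2 * H2 - (d : ℤ) ^ 2 * H1⟩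
  have hA : (0 : ℤ) < a := by exact_mod_cast ha
  have hB : (0 : ℤ) < b := by exact_mod_cast hb
  have hC : (0 : ℤ) < c := by exact_mod_cast hc
  have hD : (0 : ℤ) < d := by exact_mod_cast hd
  have hppos : (0 : ℤ) < p := by exact_mod_cast hp.pos
  rcases hpz.2.2 _ _ key with hdvd | hdvd
  · -- p ∣ ac + bd  ⇒  a = c, b = d
    left
    obtain ⟨k, hk⟩ := hdvd
    have E1 : ((a : ℤ) * c + b * d) ^ 2 + ((a : ℤ) * d - b * c) ^ 2 = (p : ℤ) ^ 2 := by
      linear_combination ((c : ℤ) ^ 2 + (d : ℤ) ^ 2) * H1 + (p : ℤ) * H2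
    have hE : (p : ℤ) ^ 2 * k ^ 2 + ((a : ℤ) * d - b * c) ^ 2 = (p : ℤ) ^ 2 := by
      linear_combination E1 - ((a : ℤ) * c + (b : ℤ) * d + (p : ℤ) * k) * hk
    have hkpos : 0 < k := by
      have hpk : 0 < (p : ℤ) * k := by rw [← hk]; positivity
      rcases mul_pos_iff.mp hpk with ⟨_, hk'⟩ | ⟨hp', _⟩
      · exact hk'
      · linarith
    have hk2 : k ^ 2 ≤ 1 := by
      nlinarith [sq_nonneg ((a : ℤ) * d - b * c), mul_pos hppos hppos]
    have hk1 : k = 1 := by nlinarith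
    have hQ : (a : ℤ) * d - b * c = 0 := by
      have h0 : ((a : ℤ) * d - b * c) ^ 2 = 0 := by
        rw [hk1] at hE; linarith
      exact pow_eq_zero_iff (by norm_num) |>.mp h0
    have hnat : a * d = b * c := by
      have : (a : ℤ) * d = b * c := by linarith
      exact_mod_cast this
    have hac : a ∣ c := by
      have : a ∣ b * c := ⟨d, by linarith [hnat.symm]⟩
      exact Nat.Coprime.dvd_of_dvd_mul_left hcab this
    obtain ⟨e, he⟩ := hac
    have hde : d = b * e := by
      have : a * d = a * (b * e) := by rw [hnat, he]; ring
      exact Nat.eq_of_mul_eq_mul_left ha this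
    have hee : e = 1 := by
      have hpe : p = e ^ 2 * p := by
        calc p = c ^ 2 + d ^ 2 := h2.symm
        _ = e ^ 2 * (a ^ 2 + b ^ 2) := by rw [he, hde]; ring
        _ = e ^ 2 * p := by rw [h1]
      have h1e : 1 ≤ e := by
        rcases Nat.eq_zero_or_pos e with h | h
        · subst h; simp at he; omega
        · exact h
      have he2 : e < 2 := by
        by_contra hcon
        push_neg at hcon
        have h4 : 4 ≤ e ^ 2 := by
          calc 4 = 2 * 2 := rfl
          _ ≤ e * e := Nat.mul_le_mul hcon hcon
          _ = e ^ 2 := (sq e).symm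
        have h5 : 4 * p ≤ e ^ 2 * p := Nat.mul_le_mul h4 (le_refl p)
        have := hp.two_le
        omega
      omega
    subst hee
    constructor
    · omega
    · rw [hde]; omega
  · -- p ∣ ac - bd  ⇒  a = d, b = c
    right
    obtain ⟨k, hk⟩ := hdvd
    have E2 : ((a : ℤ) * c - b * d) ^ 2 + ((a : ℤ) * d + b * c) ^ 2 = (p : ℤ) ^ 2 := by
      linear_combination ((c : ℤ) ^ 2 + (d : ℤ) ^ 2) * H1 + (p : ℤ) * H2
    have hE : (p : ℤ) ^ 2 * k ^ 2 + ((a : ℤ) * d + b * c) ^ 2 = (p : ℤ) ^ 2 := by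
      linear_combination E2 - ((a : ℤ) * c - (b : ℤ) * d + (p : ℤ) * k) * hk
    have hQpos : (0 : ℤ) < (a : ℤ) * d + b * c := add_pos (mul_pos hA hD) (mul_pos hB hC)
    have hlt : (p : ℤ) ^ 2 * k ^ 2 < (p : ℤ) ^ 2 := by
      have := pow_pos hQpos 2
      linarith
    have hk0 : k = 0 := by
      by_contra hk0
      have h0 : 0 < k ^ 2 := by positivity
      have h1k : 1 ≤ k ^ 2 := by simpa using Int.lt_iff_add_one_le.mp h0
      have hmono := mul_le_mul_of_nonneg_left h1k (sq_nonneg (p : ℤ))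
      rw [mul_one] at hmono
      linarith
    have hnat : a * c = b * d := by
      have : (a : ℤ) * c = b * d := by
        have h0 : (a : ℤ) * c - b * d = 0 := by rw [hk, hk0]; ring
        linarith
      exact_mod_cast this
    have had : a ∣ d := by
      have : a ∣ b * d := ⟨c, by linarith [hnat.symm]⟩
      exact Nat.Coprime.dvd_of_dvd_mul_left hcab this
    obtain ⟨e, he⟩ := had
    have hce : c = b * e := by
      have : a * c = a * (b * e) := by rw [hnat, he]; ring
      exact Nat.eq_of_mul_eq_mul_left ha this
    have hee : e = 1 := by
      have hpe : p = e ^ 2 * p := by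
        calc p = c ^ 2 + d ^ 2 := h2.symm
        _ = e ^ 2 * (b ^ 2 + a ^ 2) := by rw [he, hce]; ring
        _ = e ^ 2 * p := by rw [show b ^ 2 + a ^ 2 = p by omega]
      have h1e : 1 ≤ e := by
        rcases Nat.eq_zero_or_pos e with h | h
        · subst h; simp at he; omega
        · exact h
      have he2 : e < 2 := by
        by_contra hcon
        push_neg at hcon
        have h4 : 4 ≤ e ^ 2 := by
          calc 4 = 2 * 2 := rfl
          _ ≤ e * e := Nat.mul_le_mul hcon hcon
          _ = e ^ 2 := (sq e).symm
        have h5 : 4 * p ≤ e ^ 2 * p := Nat.mul_le_mul h4 (le_refl p)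
        have := hp.two_le
        omega
      omega
    subst hee
    constructor
    · omega
    · rw [hce]; omega

/-- Characterization of isosceles Heron triangles with odd prime legs. -/
lemma heron_iff {p : ℕ} (hp : p.Prime) (x : ℕ) :
    IsHeron p p x ↔ ∃ m h : ℕ, 0 < m ∧ 0 < h ∧ x = 2 * m ∧ m ^ 2 + h ^ 2 = p ^ 2 := by
  constructor
  · rintro ⟨-, -, hx, -, -, -, S, hS, heq⟩
    have heq' : 16 * (S : ℤ) ^ 2 = (x : ℤ) ^ 2 * (4 * (p : ℤ) ^ 2 - (x : ℤ) ^ 2) := by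
      linear_combination heq
    -- x is even
    have hxe : x % 2 = 0 := by
      by_contra hoddx
      have hx4 : (x : ZMod 4) = 1 ∨ (x : ZMod 4) = 3 := by
        have h14 : x % 4 = 1 ∨ x % 4 = 3 := by omega
        rcases h14 with h | h
        · left; rw [← ZMod.natCast_mod x 4, h]; rfl
        · right; rw [← ZMod.natCast_mod x 4, h]; rfl
      have h4 := congrArg (fun z : ℤ => (z : ZMod 4)) heq'
      push_cast at h4
      rw [show (16 : ZMod 4) = 0 by decide, show (4 : ZMod 4) = 0 by decide,
        zero_mul, zero_mul, zero_sub] at h4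
      rcases hx4 with h | h <;> rw [h] at h4 <;> revert h4 <;> decide
    obtain ⟨m, hm⟩ : ∃ m, x = 2 * m := ⟨x / 2, by omega⟩
    subst hm
    have heq'' : (S : ℤ) ^ 2 = (m : ℤ) ^ 2 * ((p : ℤ) ^ 2 - (m : ℤ) ^ 2) := by
      have h16 : (16 : ℤ) * (S : ℤ) ^ 2 =
          16 * ((m : ℤ) ^ 2 * ((p : ℤ) ^ 2 - (m : ℤ) ^ 2)) := by
        push_cast at heq' ⊢; linear_combination heq'
      linarith
    have hm0 : 0 < m := by omega
    have hmZ : (0 : ℤ) < m := by exact_mod_cast hm0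
    have hSZ : (0 : ℤ) < S := by exact_mod_cast hS
    have hlt : (m : ℤ) ^ 2 < (p : ℤ) ^ 2 := by nlinarith
    have hmp : m < p := by
      have : m ^ 2 < p ^ 2 := by exact_mod_cast hlt
      exact lt_of_pow_lt_pow_left₀ 2 (Nat.zero_le p) this
    have hle : m ^ 2 ≤ p ^ 2 := by nlinarith
    have hnat : S ^ 2 = m ^ 2 * (p ^ 2 - m ^ 2) := by
      zify [hle]; linarith [heq'']
    have hdvd : m ∣ S := by
      have : m ^ 2 ∣ S ^ 2 := ⟨p ^ 2 - m ^ 2, hnat⟩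
      exact (Nat.pow_dvd_pow_iff (by norm_num)).mp this
    obtain ⟨h, hh⟩ := hdvd
    have hh2 : h ^ 2 = p ^ 2 - m ^ 2 := by
      have : m ^ 2 * h ^ 2 = m ^ 2 * (p ^ 2 - m ^ 2) := by
        rw [← hnat, hh]; ring
      exact Nat.eq_of_mul_eq_mul_left (by positivity) this
    have hh0 : 0 < h := by
      rcases Nat.eq_zero_or_pos h with h0 | h0
      · subst h0; simp at hh; omega
      · exact h0
    exact ⟨m, h, hm0, hh0, rfl, by omega⟩
  · rintro ⟨m, h, hm0, hh0, rfl, hmh⟩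
    have hmp : m < p := by nlinarith
    have hp0 := hp.pos
    refine ⟨hp0, hp0, by omega, by omega, by omega, by omega, m * h, by positivity, ?_⟩
    have hZ : (m : ℤ) ^ 2 + (h : ℤ) ^ 2 = (p : ℤ) ^ 2 := by exact_mod_cast hmh
    push_cast
    linear_combination (16 * (m : ℤ) ^ 2) * hZ

/-- The main set identity. -/
lemma heron_set_eq {p u v : ℕ} (hp : p.Prime) (hp4 : p % 4 = 1)
    (hu : 0 < u) (hv : 0 < v) (huv : u ≠ v) (hco : Nat.Coprime u v)
    (hpuv : p = u ^ 2 + v ^ 2) :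
    {x : ℕ | IsHeron p p x} =
      {4 * u * v, (2 * ((u : ℤ) ^ 2 - (v : ℤ) ^ 2)).natAbs} := by
  have hodd : p % 2 = 1 := by omega
  set D : ℕ := ((u : ℤ) ^ 2 - (v : ℤ) ^ 2).natAbs with hD
  have hDZ : (D : ℤ) ^ 2 = ((u : ℤ) ^ 2 - (v : ℤ) ^ 2) ^ 2 := by
    rw [hD, ← Int.abs_eq_natAbs, sq_abs]
  have hD0 : 0 < D := by
    rw [hD, Int.natAbs_pos]
    intro h0
    have : (u : ℤ) ^ 2 = (v : ℤ) ^ 2 := by linarith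
    have : u ^ 2 = v ^ 2 := by exact_mod_cast this
    exact huv (Nat.pow_left_injective (by norm_num) this)
  have hpZ : (p : ℤ) = (u : ℤ) ^ 2 + (v : ℤ) ^ 2 := by exact_mod_cast hpuv
  have hkey1 : (2 * u * v) ^ 2 + D ^ 2 = p ^ 2 := by
    have : ((2 * u * v : ℕ) : ℤ) ^ 2 + (D : ℤ) ^ 2 = ((p : ℕ) : ℤ) ^ 2 := by
      push_cast
      rw [hDZ]
      linear_combination (-((p : ℤ) + (u : ℤ) ^ 2 + (v : ℤ) ^ 2)) * hpZ
    exact_mod_cast this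
  have h2D : (2 * ((u : ℤ) ^ 2 - (v : ℤ) ^ 2)).natAbs = 2 * D := by
    rw [Int.natAbs_mul, hD]; rfl
  ext x
  simp only [Set.mem_setOf_eq, Set.mem_insert_iff, Set.mem_singleton_iff, h2D]
  rw [heron_iff hp]
  constructor
  · rintro ⟨m, h, hm0, hh0, rfl, hmh⟩
    -- m, h is a primitive Pythagorean pair with hypotenuse p
    have hmp : m < p := by nlinarith
    have hcomh : Nat.Coprime m h := by
      set g := Nat.gcd m h with hg
      have hga : g ∣ m := Nat.gcd_dvd_left m h
      have hgb : g ∣ h := Nat.gcd_dvd_right m h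
      have hg2 : g ^ 2 ∣ p ^ 2 := by
        rw [← hmh]; exact Dvd.dvd.add (pow_dvd_pow_of_dvd hga 2) (pow_dvd_pow_of_dvd hgb 2)
      have hgp : g ∣ p := (Nat.pow_dvd_pow_iff (by norm_num)).mp hg2
      rcases hp.eq_one_or_self_of_dvd _ hgp with h1 | h1
      · exact h1
      · exfalso
        have := Nat.le_of_dvd hm0 hga
        omega
    have hpt : PythagoreanTriple (m : ℤ) (h : ℤ) (p : ℤ) := by
      have : (m : ℤ) ^ 2 + (h : ℤ) ^ 2 = (p : ℤ) ^ 2 := by exact_mod_cast hmh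
      unfold PythagoreanTriple
      linear_combination this
    have hgcd : Int.gcd (m : ℤ) (h : ℤ) = 1 := by
      rw [Int.gcd_natCast_natCast]; exact hcomh
    obtain ⟨s, t, hst1, hst2, hstco, -⟩ :=
      PythagoreanTriple.coprime_classification.mp ⟨hpt, hgcd⟩
    have hppos : (0 : ℤ) < p := by exact_mod_cast hp.pos
    have hpst : (p : ℤ) = s ^ 2 + t ^ 2 := by
      rcases hst2 with h' | h'
      · exact h'
      · exfalso; nlinarith [sq_nonneg s, sq_nonneg t]
    set a : ℕ := s.natAbs with hA
    set b : ℕ := t.natAbs with hB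
    have hsA : ((a : ℕ) : ℤ) ^ 2 = s ^ 2 := by rw [hA, ← Int.abs_eq_natAbs, sq_abs]
    have htB : ((b : ℕ) : ℤ) ^ 2 = t ^ 2 := by rw [hB, ← Int.abs_eq_natAbs, sq_abs]
    have hpab : a ^ 2 + b ^ 2 = p := by
      have : ((a : ℕ) : ℤ) ^ 2 + ((b : ℕ) : ℤ) ^ 2 = (p : ℤ) := by
        rw [hsA, htB]; linarith [hpst]
      exact_mod_cast this
    have ha0 : 0 < a := by
      rcases Nat.eq_zero_or_pos a with h0 | h0
      · exfalso
        have : p = b ^ 2 := by rw [← hpab, h0]; ring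
        exact prime_ne_sq hp b (by rw [this]; ring)
      · exact h0
    have hb0 : 0 < b := by
      rcases Nat.eq_zero_or_pos b with h0 | h0
      · exfalso
        have : p = a ^ 2 := by rw [← hpab, h0]; ring
        exact prime_ne_sq hp a (by rw [this]; ring)
      · exact h0
    have huniq := two_squares_unique hp ha0 hb0 hu hv hpab hpuv.symm
    -- products and differences agree
    have hab_uv : a * b = u * v := by rcases huniq with ⟨h1, h2⟩ | ⟨h1, h2⟩ <;> rw [h1, h2]
      <;> ring
    have hdiff : ((a : ℤ) ^ 2 - (b : ℤ) ^ 2).natAbs = D := by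
      rcases huniq with ⟨h1, h2⟩ | ⟨h1, h2⟩
      · rw [h1, h2]
      · rw [h1, h2, show ((v : ℤ) ^ 2 - (u : ℤ) ^ 2) = -((u : ℤ) ^ 2 - (v : ℤ) ^ 2) by ring,
          Int.natAbs_neg]
    rcases hst1 with ⟨hm1, -⟩ | ⟨hm1, -⟩
    · -- m = s² - t²  so  2m = 2D
      right
      have : (m : ℤ) = ((a : ℤ) ^ 2 - (b : ℤ) ^ 2) := by rw [← hsA, ← htB] at hm1; exact hm1
      have hmD : m = D := by
        rw [← hdiff, ← this, Int.natAbs_natCast]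
      omega
    · -- m = 2st  so  2m = 4uv
      left
      have hstpos : 0 < s * t ∨ s * t < 0 ∨ s * t = 0 := by omega
      have hmabs : m = (2 * s * t).natAbs := by
        rw [← hm1, Int.natAbs_natCast]
      have : m = 2 * (a * b) := by
        rw [hmabs, hA, hB]
        rw [show (2 : ℤ) * s * t = 2 * (s * t) by ring, Int.natAbs_mul, Int.natAbs_mul]
        rfl
      rw [this, hab_uv]
      ring
  · rintro (rfl | rfl)
    · exact ⟨2 * u * v, D, by positivity, hD0, by ring, hkey1⟩
    · refine ⟨D, 2 * u * v, hD0, by positivity, rfl, by linarith [hkey1]⟩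

/-- If `p ≡ 1 (mod 4)` is prime, then `H(p,p) = 2`: there are exactly two
`x` with `(p,p,x)` Heron, namely `x = 4uv` and `x = 2|u² - v²|` where
`p = u² + v²` with coprime positive `u ≠ v`. -/
theorem heron_isosceles_count (p : ℕ) (hp : p.Prime) (hp4 : p % 4 = 1) :
    {x : ℕ | IsHeron p p x}.ncard = 2 ∧
    ∀ u v : ℕ, 0 < u → 0 < v → u ≠ v → Nat.Coprime u v → p = u ^ 2 + v ^ 2 →
      {x : ℕ | IsHeron p p x} =
        {4 * u * v, (2 * ((u : ℤ) ^ 2 - (v : ℤ) ^ 2)).natAbs} := by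
  haveI : Fact p.Prime := ⟨hp⟩
  obtain ⟨u, v, huv2⟩ := Nat.Prime.sq_add_sq (p := p) (by omega)
  have hpuv : p = u ^ 2 + v ^ 2 := huv2.symm
  have hu : 0 < u := by
    rcases Nat.eq_zero_or_pos u with h0 | h0
    · exfalso
      have : p = v ^ 2 := by rw [hpuv, h0]; ring
      exact prime_ne_sq hp v (by rw [this]; ring)
    · exact h0
  have hv : 0 < v := by
    rcases Nat.eq_zero_or_pos v with h0 | h0
    · exfalso
      have : p = u ^ 2 := by rw [hpuv, h0]; ring
      exact prime_ne_sq hp u (by rw [this]; ring)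
    · exact h0
  have huvne : u ≠ v := by
    intro h
    subst h
    rcases hp.eq_one_or_self_of_dvd 2 ⟨u ^ 2, by rw [hpuv]; ring⟩ with h2 | h2
    · omega
    · omega
  have hco : Nat.Coprime u v := coprime_of_sq_add_sq hp huv2
  have hset := heron_set_eq hp hp4 hu hv huvne hco hpuv
  constructor
  · rw [hset]
    have hpar : u % 2 ≠ v % 2 := by
      have h2 : u ^ 2 % 2 = u % 2 := by
        rcases Nat.mod_two_eq_zero_or_one u with h | h <;> rw [Nat.pow_mod, h] <;> rfl
      have h3 : v ^ 2 % 2 = v % 2 := by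
        rcases Nat.mod_two_eq_zero_or_one v with h | h <;> rw [Nat.pow_mod, h] <;> rfl
      intro h
      have h4 : p % 2 = (u ^ 2 % 2 + v ^ 2 % 2) % 2 := by
        conv_lhs => rw [hpuv]
        rw [Nat.add_mod]
      rw [h2, h3] at h4
      omega
    have hparE : ¬ (Even u ↔ Even v) := by
      rw [Nat.even_iff, Nat.even_iff]
      intro hiff
      rcases Nat.mod_two_eq_zero_or_one u with h | h
      · exact hpar (h.trans (hiff.mp h).symm)
      · rcases Nat.mod_two_eq_zero_or_one v with h' | h'
        · have := hiff.mpr h'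
          omega
        · exact hpar (h.trans h'.symm)
    have hDodd : ¬ Even ((u : ℤ) ^ 2 - (v : ℤ) ^ 2).natAbs := by
      rw [Int.natAbs_even, Int.even_sub]
      intro hiff
      apply hparE
      have e1 : Even ((u : ℤ) ^ 2) ↔ Even u := by
        rw [Int.even_pow]
        simp [Int.even_coe_nat]
      have e2 : Even ((v : ℤ) ^ 2) ↔ Even v := by
        rw [Int.even_pow]
        simp [Int.even_coe_nat]
      exact (e1.symm.trans hiff).trans e2
    have hne : 4 * u * v ≠ (2 * ((u : ℤ) ^ 2 - (v : ℤ) ^ 2)).natAbs := by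
      have h2D : (2 * ((u : ℤ) ^ 2 - (v : ℤ) ^ 2)).natAbs
          = 2 * ((u : ℤ) ^ 2 - (v : ℤ) ^ 2).natAbs := by
        rw [Int.natAbs_mul]; rfl
      rw [h2D]
      intro hcontra
      apply hDodd
      refine ⟨u * v, ?_⟩
      linarith [hcontra]
    exact Set.ncard_pair hne
  · intro u' v' hu' hv' hne' hco' hp'
    exact heron_set_eq hp hp4 hu' hv' hne' hco' hp'
end

section
/- Let q = z² + w² be an odd prime with z odd and w even positive integers. Then for a prime p and positive integer x₁, the equation p² + q² + 2p(z² - w²) = x₁² holds if and only if there is a positive integer δ such that δ divides z², δ+1 divides w², and p = z²/δ + w²/(δ+1). -/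
/-- Lemma 2.5: with `q = z² + w²` an odd prime (`z` odd, `w` even), a prime `p`
admits a positive integer `x₁` with `p² + q² + 2p(z² - w²) = x₁²` iff
`p = z²/δ + w²/(δ+1)` for some positive integer `δ` with `δ ∣ z²` and
`(δ+1) ∣ w²`. -/
theorem heron_lemma25 (p q z w : ℕ)
    (hp : p.Prime) (hq : q.Prime) (hqodd : Odd q)
    (hz : 0 < z) (hw : 0 < w) (hzodd : Odd z) (hweven : Even w)
    (hq' : q = z ^ 2 + w ^ 2) :
    (∃ x₁ : ℕ, 0 < x₁ ∧
        (p : ℤ) ^ 2 + (q : ℤ) ^ 2 + 2 * p * ((z : ℤ) ^ 2 - (w : ℤ) ^ 2)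
          = (x₁ : ℤ) ^ 2) ↔
      ∃ δ : ℕ, 0 < δ ∧ δ ∣ z ^ 2 ∧ (δ + 1) ∣ w ^ 2 ∧
        p = z ^ 2 / δ + w ^ 2 / (δ + 1) := by
  have hz2 : 0 < z ^ 2 := pow_pos hz 2
  have hw2 : 0 < w ^ 2 := pow_pos hw 2
  have hqz : (q : ℤ) = (z:ℤ)^2 + (w:ℤ)^2 := by exact_mod_cast congrArg (Nat.cast (R := ℤ)) hq'
  constructor
  · rintro ⟨x₁, hx₁, heq⟩
    set A : ℤ := (p:ℤ) + (z:ℤ)^2 - (w:ℤ)^2 with hA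
    have key : (x₁:ℤ)^2 = A^2 + 4*(z:ℤ)^2*(w:ℤ)^2 := by
      rw [hqz] at heq; linear_combination -heq
    -- parity: x₁ - A is even
    obtain ⟨k1, hk1⟩ := Int.even_mul_succ_self (x₁:ℤ)
    obtain ⟨k2, hk2⟩ := Int.even_mul_succ_self A
    obtain ⟨u, hu⟩ : ∃ u : ℤ, (x₁:ℤ) - A = 2 * u :=
      ⟨k1 - k2 - 2*((z:ℤ)^2*(w:ℤ)^2), by linear_combination hk1 - hk2 - key⟩
    set v : ℤ := u + A with hv
    have huv : u * v = (z:ℤ)^2 * (w:ℤ)^2 := by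
      have h4 : 4 * (u * v) = 4 * ((z:ℤ)^2 * (w:ℤ)^2) := by
        linear_combination key - ((x₁:ℤ) + A + 2*u) * hu
      exact mul_left_cancel₀ (by norm_num) h4
    have hz2' : (0:ℤ) < (z:ℤ)^2 := by exact_mod_cast hz2
    have hw2' : (0:ℤ) < (w:ℤ)^2 := by exact_mod_cast hw2
    have hx₁' : (0:ℤ) < (x₁:ℤ) := by exact_mod_cast hx₁
    have hupos : 0 < u := by nlinarith [mul_pos hz2' hw2']
    have hvpos : 0 < v := by nlinarith [mul_pos hz2' hw2']
    set aZ : ℤ := v - (z:ℤ)^2 with haZ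
    set bZ : ℤ := (w:ℤ)^2 - u with hbZ
    have hpZ : (0:ℤ) < (p:ℤ) := by exact_mod_cast hp.pos
    have habp : aZ + bZ = (p:ℤ) := by simp only [haZ, hbZ, hv, hA]; ring
    have hawb : aZ * (w:ℤ)^2 = bZ * v := by
      simp only [haZ, hbZ]; linear_combination huv
    have hapos : 0 < aZ := by
      by_contra h
      push_neg at h
      have h1 : bZ * v ≤ 0 := by
        rw [← hawb]; exact mul_nonpos_of_nonpos_of_nonneg h hw2'.le
      have h2 : bZ ≤ 0 := by
        by_contra hb'
        push_neg at hb'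
        exact absurd (mul_pos hb' hvpos) (by linarith)
      linarith
    have hbpos : 0 < bZ := by
      have h1 : 0 < bZ * v := by rw [← hawb]; exact mul_pos hapos hw2'
      by_contra h
      push_neg at h
      exact absurd (mul_nonpos_of_nonpos_of_nonneg h hvpos.le) (by linarith)
    obtain ⟨a, ha⟩ : ∃ a : ℕ, (a:ℤ) = aZ := ⟨aZ.toNat, Int.toNat_of_nonneg hapos.le⟩
    obtain ⟨b, hb⟩ : ∃ b : ℕ, (b:ℤ) = bZ := ⟨bZ.toNat, Int.toNat_of_nonneg hbpos.le⟩
    have hapos' : 0 < a := by exact_mod_cast ha ▸ hapos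
    have hbpos' : 0 < b := by exact_mod_cast hb ▸ hbpos
    have hpab : p = a + b := by
      have : (p:ℤ) = (a:ℤ) + (b:ℤ) := by rw [ha, hb, habp]
      exact_mod_cast this
    -- key nat equation: a * w² = b * (z² + a)
    have hnat : a * w^2 = b * (z^2 + a) := by
      have : (a:ℤ) * (w:ℤ)^2 = (b:ℤ) * ((z:ℤ)^2 + (a:ℤ)) := by
        rw [ha, hb]; have : v = (z:ℤ)^2 + aZ := by simp [haZ]
        rw [this] at hawb; exact hawb
      exact_mod_cast this
    -- a ∣ b * z², b ∣ a * w²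
    have hsum : b * z^2 + a * b = a * w^2 := by rw [hnat]; ring
    have hadvd : a ∣ b * z^2 := by
      have h1 : b * z^2 = a * w^2 - a * b := by omega
      rw [h1]; exact Nat.dvd_sub (Dvd.intro _ rfl) (Dvd.intro _ rfl)
    have hbdvd : b ∣ a * w^2 := ⟨z^2 + a, hnat⟩
    -- gcd a b = 1
    have hco : Nat.Coprime a b := by
      have hg : Nat.gcd a b ∣ p := hpab ▸ Nat.dvd_add (Nat.gcd_dvd_left a b) (Nat.gcd_dvd_right a b)
      rcases (Nat.Prime.eq_one_or_self_of_dvd hp _ hg) with h | h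
      · exact h
      · exfalso
        have h1 : Nat.gcd a b ≤ a := Nat.le_of_dvd hapos' (Nat.gcd_dvd_left a b)
        omega
    have hadz : a ∣ z^2 := (Nat.Coprime.dvd_of_dvd_mul_left hco hadvd)
    have hbdw : b ∣ w^2 := (Nat.Coprime.dvd_of_dvd_mul_left hco.symm hbdvd)
    refine ⟨z^2 / a, Nat.div_pos (Nat.le_of_dvd hz2 hadz) hapos', Nat.div_dvd_of_dvd hadz, ?_, ?_⟩
    · refine ⟨b, ?_⟩
      have hda : z^2 / a * a = z^2 := Nat.div_mul_cancel hadz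
      have : a * ((z^2/a + 1) * b) = a * w^2 := by
        calc a * ((z^2/a + 1) * b) = (z^2/a * a + a) * b := by ring
        _ = (z^2 + a) * b := by rw [hda]
        _ = a * w^2 := by rw [mul_comm, ← hnat]
      exact (Nat.eq_of_mul_eq_mul_left hapos' this).symm
    · have hda : z^2 / a * a = z^2 := Nat.div_mul_cancel hadz
      have h1 : z^2 / (z^2/a) = a := by
        rw [Nat.div_div_self hadz hz2.ne']
      have h2 : (z^2/a + 1) * b = w^2 := by
        have : a * ((z^2/a + 1) * b) = a * w^2 := by
          calc a * ((z^2/a + 1) * b) = (z^2/a * a + a) * b := by ring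
          _ = (z^2 + a) * b := by rw [hda]
          _ = a * w^2 := by rw [mul_comm, ← hnat]
        exact Nat.eq_of_mul_eq_mul_left hapos' this
      have h3 : w^2 / (z^2/a + 1) = b := by
        rw [← h2, Nat.mul_div_cancel_left _ (Nat.succ_pos _)]
      rw [h1, h3, hpab]
  · rintro ⟨δ, hδ, hdz, hdw, hpeq⟩
    set a := z^2 / δ with haa
    set b := w^2 / (δ+1) with hbb
    have hda : δ * a = z^2 := Nat.mul_div_cancel' hdz
    have hdb : (δ+1) * b = w^2 := Nat.mul_div_cancel' hdw
    refine ⟨(δ+1)*a + δ*b, ?_, ?_⟩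
    · have : 0 < a := by
        rcases Nat.eq_zero_or_pos a with h | h
        · rw [h, Nat.mul_zero] at hda; omega
        · exact h
      positivity
    · have hdaZ : (δ:ℤ) * (a:ℤ) = (z:ℤ)^2 := by exact_mod_cast hda
      have hdbZ : ((δ:ℤ)+1) * (b:ℤ) = (w:ℤ)^2 := by exact_mod_cast hdb
      have hpZ : (p:ℤ) = (a:ℤ) + (b:ℤ) := by exact_mod_cast hpeq
      push_cast
      rw [hqz, hpZ, ← hdaZ, ← hdbZ]
      ring
end

section
/- Let q = z² + w² be an odd prime with z odd and w even, and suppose δ is a positive integer with δ ∣ z² and (δ+1) ∣ w². If p = z²/δ + w²/(δ+1), then p² + q² + 2p(z² - w²) = x² where x = (δ+1)z²/δ + δw²/(δ+1), and x is a positive integer. -/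
/-- The "if" direction of Lemma 2.5 with the explicit value of `x`. -/
theorem heron_lemma25_if (p q z w δ : ℕ)
    (hq : q.Prime) (hqodd : Odd q)
    (hz : 0 < z) (hw : 0 < w) (hzodd : Odd z) (hweven : Even w)
    (hq' : q = z ^ 2 + w ^ 2)
    (hδ : 0 < δ) (hδz : δ ∣ z ^ 2) (hδw : (δ + 1) ∣ w ^ 2)
    (hp : p = z ^ 2 / δ + w ^ 2 / (δ + 1)) :
    0 < (δ + 1) * z ^ 2 / δ + δ * w ^ 2 / (δ + 1) ∧
    (p : ℤ) ^ 2 + (q : ℤ) ^ 2 + 2 * p * ((z : ℤ) ^ 2 - (w : ℤ) ^ 2) =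
      (((δ + 1) * z ^ 2 / δ + δ * w ^ 2 / (δ + 1) : ℕ) : ℤ) ^ 2 := by
  obtain ⟨a, ha⟩ := hδz
  obtain ⟨b, hb⟩ := hδw
  have ha' : z ^ 2 / δ = a := by rw [ha]; exact Nat.mul_div_cancel_left a hδ
  have hb' : w ^ 2 / (δ + 1) = b := by
    rw [hb]; exact Nat.mul_div_cancel_left b (Nat.succ_pos δ)
  have h1 : (δ + 1) * z ^ 2 / δ = (δ + 1) * a := by
    rw [ha, ← mul_assoc, mul_comm (δ + 1) δ, mul_assoc]
    exact Nat.mul_div_cancel_left _ hδ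
  have h2 : δ * w ^ 2 / (δ + 1) = δ * b := by
    rw [hb, ← mul_assoc, mul_comm δ (δ + 1), mul_assoc]
    exact Nat.mul_div_cancel_left _ (Nat.succ_pos δ)
  have hapos : 0 < a := by
    have h0 : 0 < δ * a := ha ▸ pow_pos hz 2
    exact Nat.pos_of_ne_zero fun h => by simp [h] at h0
  constructor
  · rw [h1, h2]; positivity
  · have hzi : (z : ℤ) ^ 2 = δ * a := by exact_mod_cast ha
    have hwi : (w : ℤ) ^ 2 = (δ + 1) * b := by exact_mod_cast hb
    rw [hp, ha', hb', h1, h2, hq']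
    push_cast
    rw [hzi, hwi]
    ring
end

section
/- Let q = z² + w² be an odd prime with z odd and w even. Then the two equations p² + q² + 2p(z² - w²) = x₁² and p² + q² - 2p(z² - w²) = x₂² cannot both have positive integer solutions x₁, x₂ for the same prime p. -/
/-- Key extraction lemma (one direction of Lemma 2.5): if
`x² = (p + z² - w²)² + (2zw)²` has a positive solution with `p` prime, then
`p = z²/δ + w²/(δ+1)` for some positive `δ` with `δ ∣ z²` and `δ+1 ∣ w²`. -/
lemma heron_key (p z w : ℕ) (x : ℤ) (hp : p.Prime) (hz : 0 < z) (hw : 0 < w)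
    (hx : 0 < x)
    (heq : x ^ 2 = ((p : ℤ) + (z : ℤ) ^ 2 - (w : ℤ) ^ 2) ^ 2 + (2 * z * w) ^ 2) :
    ∃ δ : ℕ, 0 < δ ∧ δ ∣ z ^ 2 ∧ (δ + 1) ∣ w ^ 2 ∧
      p * δ * (δ + 1) = z ^ 2 * (δ + 1) + w ^ 2 * δ := by
  set P : ℤ := (p : ℤ) + (z : ℤ) ^ 2 - (w : ℤ) ^ 2 with hP
  have hzw : (0 : ℤ) < (z : ℤ) * w := by positivity
  have hsq : P ^ 2 < x ^ 2 := by nlinarith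
  have hxm : 0 < x - P := by nlinarith [sq_nonneg (x + P), sq_nonneg (x - P)]
  have hxp : 0 < x + P := by nlinarith [sq_nonneg (x + P), sq_nonneg (x - P)]
  have hprod : (x - P) * (x + P) = 4 * ((z : ℤ) * w) ^ 2 := by linear_combination heq
  -- both factors are even
  have heven : Even (x - P) := by
    rcases Int.even_mul.mp (⟨2 * ((z : ℤ) * w) ^ 2, by linarith [hprod]⟩ :
        Even ((x - P) * (x + P))) with h | h
    · exact h
    · obtain ⟨k, hk⟩ := h
      exact ⟨k - P, by linarith⟩
  obtain ⟨a, ha⟩ := heven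
  have hbEven : Even (x + P) := ⟨a + P, by linarith⟩
  obtain ⟨b, hb⟩ := hbEven
  have ha0 : 0 < a := by linarith
  have hb0 : 0 < b := by linarith
  have hab : a * b = ((z : ℤ) * w) ^ 2 := by nlinarith [hprod]
  -- move to ℕ
  obtain ⟨A, rfl⟩ := Int.eq_ofNat_of_zero_le (by linarith : (0:ℤ) ≤ a)
  obtain ⟨B, rfl⟩ := Int.eq_ofNat_of_zero_le (by linarith : (0:ℤ) ≤ b)
  have hA0 : 0 < A := by exact_mod_cast ha0
  have hB0 : 0 < B := by exact_mod_cast hb0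
  have habN : A * B = z ^ 2 * w ^ 2 := by
    have h : ((A : ℤ)) * B = ((z : ℤ)) ^ 2 * ((w : ℤ)) ^ 2 := by linear_combination hab
    exact_mod_cast h
  -- decompose A = s * t with s ∣ z², t ∣ w²
  obtain ⟨s, t, hs, ht, hst⟩ := exists_dvd_and_dvd_of_dvd_mul ⟨B, habN.symm⟩
  obtain ⟨Z, hZ⟩ := hs
  obtain ⟨W, hW⟩ := ht
  have hs0 : 0 < s := by
    rcases Nat.eq_zero_or_pos s with h | h
    · exfalso; rw [h] at hst; simp [hst] at hA0
    · exact h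
  have ht0 : 0 < t := by
    rcases Nat.eq_zero_or_pos t with h | h
    · exfalso; rw [h] at hst; simp [hst] at hA0
    · exact h
  have hZ0 : 0 < Z := by
    rcases Nat.eq_zero_or_pos Z with h | h
    · exfalso; rw [h, mul_zero] at hZ; exact absurd hZ (pow_ne_zero 2 hz.ne')
    · exact h
  have hW0 : 0 < W := by
    rcases Nat.eq_zero_or_pos W with h | h
    · exfalso; rw [h, mul_zero] at hW; exact absurd hW (pow_ne_zero 2 hw.ne')
    · exact h
  -- B = Z * W
  have hB : B = Z * W := by
    have h1 : (s * t) * B = (s * t) * (Z * W) := by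
      calc (s * t) * B = A * B := by rw [hst]
        _ = z ^ 2 * w ^ 2 := habN
        _ = (s * Z) * (t * W) := by rw [hZ, hW]
        _ = (s * t) * (Z * W) := by ring
    exact Nat.eq_of_mul_eq_mul_left (by positivity) h1
  -- p = (Z + t) * (W - s) over ℤ
  have hba : (B : ℤ) - (A : ℤ) = P := by linarith
  have hpfact : (p : ℤ) = ((Z : ℤ) + t) * ((W : ℤ) - s) := by
    have e1 : (A : ℤ) = (s : ℤ) * t := by exact_mod_cast hst
    have e2 : (B : ℤ) = (Z : ℤ) * W := by exact_mod_cast hB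
    have e3 : ((z : ℤ)) ^ 2 = (s : ℤ) * Z := by exact_mod_cast hZ
    have e4 : ((w : ℤ)) ^ 2 = (t : ℤ) * W := by exact_mod_cast hW
    have : (p : ℤ) = (B : ℤ) - A - (z:ℤ)^2 + (w:ℤ)^2 := by
      rw [hba, hP]; ring
    rw [this, e1, e2, e3, e4]; ring
  have hWs : (s : ℤ) < (W : ℤ) := by
    by_contra h
    push_neg at h
    have h1 : (0 : ℤ) < (Z : ℤ) + t := by positivity
    have h2 : (0 : ℤ) < (p : ℤ) := by exact_mod_cast hp.pos
    have h3 : ((Z : ℤ) + t) * ((W : ℤ) - s) ≤ 0 :=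
      mul_nonpos_of_nonneg_of_nonpos h1.le (by linarith)
    linarith [hpfact]
  have hWsN : s < W := by exact_mod_cast hWs
  -- as naturals
  have hpN : p = (Z + t) * (W - s) := by
    have : ((p : ℕ) : ℤ) = (((Z + t) * (W - s) : ℕ) : ℤ) := by
      push_cast [Nat.cast_sub hWsN.le]
      linarith [hpfact]
    exact_mod_cast this
  have hdvd : (Z + t) ∣ p := ⟨W - s, hpN⟩
  rcases (hp.eq_one_or_self_of_dvd _ hdvd) with h1 | h1
  · omega
  · have hws1 : W - s = 1 := by
      have hp0 := hp.pos
      rw [h1] at hpN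
      have h2 : p * 1 = p * (W - s) := by simpa using hpN
      exact (Nat.eq_of_mul_eq_mul_left hp0 h2).symm
    have hW1 : W = s + 1 := by omega
    refine ⟨s, hs0, ⟨Z, hZ⟩, ⟨t, by rw [hW] ; rw [hW1]; ring⟩, ?_⟩
    have hpZ : p = Z + t := by omega
    rw [hpZ, hZ, hW, hW1]; ring

/-- Corollary 2.6: with `q = z² + w²` an odd prime (`z` odd, `w` even), the
equations `p² + q² + 2p(z² - w²) = x₁²` and `p² + q² - 2p(z² - w²) = x₂²`
cannot both have positive integer solutions. -/
theorem heron_cor26 (p q z w : ℕ)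
    (hp : p.Prime) (hq : q.Prime) (hqodd : Odd q)
    (hz : 0 < z) (hw : 0 < w) (hzodd : Odd z) (hweven : Even w)
    (hcop : Nat.Coprime z w)
    (hq' : q = z ^ 2 + w ^ 2) :
    ¬((∃ x₁ : ℕ, 0 < x₁ ∧
        (p : ℤ) ^ 2 + (q : ℤ) ^ 2 + 2 * p * ((z : ℤ) ^ 2 - (w : ℤ) ^ 2)
          = (x₁ : ℤ) ^ 2) ∧
      (∃ x₂ : ℕ, 0 < x₂ ∧
        (p : ℤ) ^ 2 + (q : ℤ) ^ 2 - 2 * p * ((z : ℤ) ^ 2 - (w : ℤ) ^ 2)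
          = (x₂ : ℤ) ^ 2)) := by
  rintro ⟨⟨x₁, hx₁0, hx₁⟩, ⟨x₂, hx₂0, hx₂⟩⟩
  have hqZ : (q : ℤ) = (z : ℤ) ^ 2 + (w : ℤ) ^ 2 := by exact_mod_cast hq'
  have heq1 : ((x₁ : ℤ)) ^ 2 = ((p : ℤ) + (z : ℤ) ^ 2 - (w : ℤ) ^ 2) ^ 2
      + (2 * z * w) ^ 2 := by
    linear_combination -hx₁ + ((q : ℤ) + (z : ℤ) ^ 2 + (w : ℤ) ^ 2) * hqZ
  have heq2 : ((x₂ : ℤ)) ^ 2 = ((p : ℤ) + (w : ℤ) ^ 2 - (z : ℤ) ^ 2) ^ 2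
      + (2 * w * z) ^ 2 := by
    linear_combination -hx₂ + ((q : ℤ) + (z : ℤ) ^ 2 + (w : ℤ) ^ 2) * hqZ
  obtain ⟨δ, hδ0, hδz, hδw, e1⟩ :=
    heron_key p z w x₁ hp hz hw (by exact_mod_cast hx₁0) heq1
  obtain ⟨μ, hμ0, hμw, hμz, e2⟩ :=
    heron_key p w z x₂ hp hw hz (by exact_mod_cast hx₂0) heq2
  have E1 : (p : ℤ) * δ * (δ + 1) = (z : ℤ) ^ 2 * (δ + 1) + (w : ℤ) ^ 2 * δ := by
    exact_mod_cast e1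
  have E2 : (p : ℤ) * μ * (μ + 1) = (w : ℤ) ^ 2 * (μ + 1) + (z : ℤ) ^ 2 * μ := by
    exact_mod_cast e2
  have star : (z : ℤ) ^ 2 * ((μ : ℤ) * ((δ : ℤ) + 1) * ((μ : ℤ) + 1 - δ))
      = (w : ℤ) ^ 2 * ((δ : ℤ) * ((μ : ℤ) + 1) * ((δ : ℤ) + 1 - μ)) := by
    linear_combination ((δ : ℤ) * (δ + 1)) * E2 - ((μ : ℤ) * (μ + 1)) * E1
  have hzp : (0 : ℤ) < (z : ℤ) ^ 2 := by positivity
  have hwp : (0 : ℤ) < (w : ℤ) ^ 2 := by positivity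
  have hδp : (0 : ℤ) < (δ : ℤ) := by exact_mod_cast hδ0
  have hμp : (0 : ℤ) < (μ : ℤ) := by exact_mod_cast hμ0
  rcases lt_trichotomy δ μ with h | h | h
  · -- δ < μ : LHS > 0, RHS ≤ 0
    have hc : (δ : ℤ) < μ := by exact_mod_cast h
    have t1 : (0 : ℤ) < (μ : ℤ) * ((δ : ℤ) + 1) * ((μ : ℤ) + 1 - δ) :=
      mul_pos (mul_pos hμp (by linarith)) (by linarith)
    have t2 : (δ : ℤ) * ((μ : ℤ) + 1) * ((δ : ℤ) + 1 - μ) ≤ 0 :=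
      mul_nonpos_of_nonneg_of_nonpos (by positivity) (by linarith)
    have l1 : (0 : ℤ) < (z : ℤ) ^ 2 * ((μ : ℤ) * ((δ : ℤ) + 1) * ((μ : ℤ) + 1 - δ)) :=
      mul_pos hzp t1
    have l2 : (w : ℤ) ^ 2 * ((δ : ℤ) * ((μ : ℤ) + 1) * ((δ : ℤ) + 1 - μ)) ≤ 0 :=
      mul_nonpos_of_nonneg_of_nonpos (by positivity) t2
    linarith [star]
  · -- δ = μ : z² = w², contradicting parity
    subst h
    have hz2w2 : (z : ℤ) ^ 2 = (w : ℤ) ^ 2 := by linear_combination E2 - E1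
    have hN : z ^ 2 = w ^ 2 := by exact_mod_cast hz2w2
    have : z = w := Nat.pow_left_injective (by norm_num) hN
    rw [this] at hzodd
    exact (Nat.not_odd_iff_even.mpr hweven) hzodd
  · -- μ < δ : either δ = μ + 1 or δ ≥ μ + 2
    have hc : δ = μ + 1 ∨ μ + 2 ≤ δ := by omega
    rcases hc with h1 | h1
    · subst h1
      have l2 : (0 : ℤ) < (w : ℤ) ^ 2 * (((μ : ℤ) + 1) * ((μ : ℤ) + 1) * (((μ : ℤ) + 1) + 1 - μ)) :=
        mul_pos hwp (mul_pos (mul_pos (by linarith) (by linarith)) (by linarith))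
      have l1 : (z : ℤ) ^ 2 * ((μ : ℤ) * (((μ : ℤ) + 1) + 1) * ((μ : ℤ) + 1 - ((μ : ℤ) + 1))) = 0 := by
        ring
      have star' : (z : ℤ) ^ 2 * ((μ : ℤ) * (((μ : ℤ) + 1) + 1) * ((μ : ℤ) + 1 - ((μ : ℤ) + 1)))
          = (w : ℤ) ^ 2 * (((μ : ℤ) + 1) * ((μ : ℤ) + 1) * (((μ : ℤ) + 1) + 1 - μ)) := by
        push_cast at star ⊢
        linear_combination star
      linarith
    · have hc2 : (μ : ℤ) + 2 ≤ δ := by exact_mod_cast h1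
      have t1 : (μ : ℤ) * ((δ : ℤ) + 1) * ((μ : ℤ) + 1 - δ) < 0 :=
        mul_neg_of_pos_of_neg (mul_pos hμp (by linarith)) (by linarith)
      have t2 : (0 : ℤ) < (δ : ℤ) * ((μ : ℤ) + 1) * ((δ : ℤ) + 1 - μ) :=
        mul_pos (mul_pos hδp (by linarith)) (by linarith)
      have l1 : (z : ℤ) ^ 2 * ((μ : ℤ) * ((δ : ℤ) + 1) * ((μ : ℤ) + 1 - δ)) < 0 :=
        mul_neg_of_pos_of_neg hzp t1
      have l2 : (0 : ℤ) < (w : ℤ) ^ 2 * ((δ : ℤ) * ((μ : ℤ) + 1) * ((δ : ℤ) + 1 - μ)) :=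
        mul_pos hwp t2
      linarith [star]
end

section
/- If s and t are positive integers such that p = 3t² + 2s² and q = 9t² + 4s² are both prime, then (p, q, 6(s² + t²)) is a Heron triangle, i.e., its area is a positive integer. -/
/-- Example 1: if `p = 3t² + 2s²` and `q = 9t² + 4s²` are prime, then
`(p, q, 6(s² + t²))` is a Heron triangle. -/
theorem heron_example (s t : ℕ) (hs : 0 < s) (ht : 0 < t)
    (hp : (3 * t ^ 2 + 2 * s ^ 2).Prime) (hq : (9 * t ^ 2 + 4 * s ^ 2).Prime) :
    IsHeron (3 * t ^ 2 + 2 * s ^ 2) (9 * t ^ 2 + 4 * s ^ 2) (6 * (s ^ 2 + t ^ 2)) := by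
  refine ⟨by positivity, by positivity, by positivity, by nlinarith, by nlinarith, by nlinarith,
    6 * s * t * (3 * t ^ 2 + 2 * s ^ 2), by positivity, ?_⟩
  push_cast
  ring
end

section
/- Let A, B, C, D, E be rational numbers with A, D, E all nonzero, and let F(t,z) = At⁴ - (Bz² + C)t² - (Dz + E)² ∈ ℚ[t,z]. Then F has no factor of the form t - f(z) with f ∈ ℚ[z]; i.e., every irreducible factor of F has degree at least 2 in t. -/
open Polynomial in
/-- Lemma 3.3: `F(t,z) = At⁴ - (Bz² + C)t² - (Dz + E)²` with `ADE ≠ 0` has no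
factor of the form `t - f(z)`, i.e. `F(f(z), z) ≠ 0` for every `f ∈ ℚ[z]`. -/
theorem heron_no_linear_factor (A B C D E : ℚ)
    (hA : A ≠ 0) (hD : D ≠ 0) (hE : E ≠ 0) :
    ∀ f : Polynomial ℚ,
      Polynomial.C A * f ^ 4 - (Polynomial.C B * X ^ 2 + Polynomial.C C) * f ^ 2
          - (Polynomial.C D * X + Polynomial.C E) ^ 2 ≠ 0 := by
  intro f h
  rcases lt_or_ge f.natDegree 2 with h2 | h2
  · -- degree ≤ 1 : f = a X + b
    obtain ⟨a, b, rfl⟩ : ∃ a b, f = Polynomial.C a * X + Polynomial.C b := by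
      refine ⟨f.coeff 1, f.coeff 0, ?_⟩
      exact Polynomial.eq_X_add_C_of_natDegree_le_one (by omega)
    have hrw : Polynomial.C A * (Polynomial.C a * X + Polynomial.C b) ^ 4 -
        (Polynomial.C B * X ^ 2 + Polynomial.C C) * (Polynomial.C a * X + Polynomial.C b) ^ 2
          - (Polynomial.C D * X + Polynomial.C E) ^ 2
        = Polynomial.C (A*a^4 - B*a^2) * X^4 + Polynomial.C (4*A*a^3*b - 2*B*a*b) * X^3
          + Polynomial.C (6*A*a^2*b^2 - B*b^2 - C*a^2 - D^2) * X^2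
          + Polynomial.C (4*A*a*b^3 - 2*C*a*b - 2*D*E) * X
          + Polynomial.C (A*b^4 - C*b^2 - E^2) := by
      simp only [map_sub, map_mul, map_add, map_pow, map_ofNat]
      ring
    rw [hrw] at h
    have h4 := congrArg (fun p => Polynomial.coeff p 4) h
    have h3 := congrArg (fun p => Polynomial.coeff p 3) h
    have h1 := congrArg (fun p => Polynomial.coeff p 1) h
    simp only [Polynomial.coeff_add, Polynomial.coeff_C_mul, Polynomial.coeff_X_pow,
      Polynomial.coeff_X, Polynomial.coeff_C, Polynomial.coeff_zero] at h4 h3 h1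
    norm_num at h4 h3 h1
    rcases eq_or_ne a 0 with rfl | ha
    · have : D * E = 0 := by linear_combination -h1 / 2
      rcases mul_eq_zero.mp this with h | h
      · exact hD h
      · exact hE h
    · have hB : B = A * a ^ 2 := by
        have : B * a ^ 2 = (A * a ^ 2) * a ^ 2 := by linear_combination -h4
        exact mul_right_cancel₀ (pow_ne_zero 2 ha) this
      subst hB
      have hb : b = 0 := by
        have h3' : (2 * (A * a ^ 3)) * b = 0 := by linear_combination h3
        rcases mul_eq_zero.mp h3' with h | h
        · exact absurd h (by simp [hA, ha, pow_ne_zero])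
        · exact h
      subst hb
      have : D * E = 0 := by linear_combination -h1 / 2
      rcases mul_eq_zero.mp this with h | h
      · exact hD h
      · exact hE h
  · -- degree ≥ 2
    have hf0 : f ≠ 0 := fun hf => by simp [hf] at h2
    set n := f.natDegree with hn
    have hc := congrArg (fun p => Polynomial.coeff p (4 * n)) h
    have hc1 : (Polynomial.C A * f ^ 4).coeff (4 * n) = A * f.leadingCoeff ^ 4 := by
      rw [Polynomial.coeff_C_mul, Polynomial.coeff_pow_mul_natDegree]
    have hd2 : ((Polynomial.C B * X ^ 2 + Polynomial.C C) * f ^ 2).natDegree < 4 * n := by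
      calc ((Polynomial.C B * X ^ 2 + Polynomial.C C) * f ^ 2).natDegree
          ≤ (Polynomial.C B * X ^ 2 + Polynomial.C C).natDegree + (f ^ 2).natDegree :=
            Polynomial.natDegree_mul_le
        _ ≤ 2 + 2 * n := by
            gcongr
            · apply le_trans (Polynomial.natDegree_add_le _ _)
              simp [Polynomial.natDegree_C_mul_le]
              exact le_trans (Polynomial.natDegree_C_mul_le _ _) (by simp)
            · exact le_trans Polynomial.natDegree_pow_le (by omega)
        _ < 4 * n := by omega
    have hd3 : ((Polynomial.C D * X + Polynomial.C E) ^ 2).natDegree < 4 * n := by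
      calc ((Polynomial.C D * X + Polynomial.C E) ^ 2).natDegree
          ≤ 2 * (Polynomial.C D * X + Polynomial.C E).natDegree :=
            Polynomial.natDegree_pow_le
        _ ≤ 2 * 1 := by
            gcongr
            apply le_trans (Polynomial.natDegree_add_le _ _)
            simp
            exact le_trans (Polynomial.natDegree_C_mul_le _ _) (by simp)
        _ < 4 * n := by omega
    simp only [Polynomial.coeff_sub, hc1,
      Polynomial.coeff_eq_zero_of_natDegree_lt hd2,
      Polynomial.coeff_eq_zero_of_natDegree_lt hd3, Polynomial.coeff_zero,
      sub_zero] at hc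
    have : f.leadingCoeff ≠ 0 := Polynomial.leadingCoeff_ne_zero.mpr hf0
    have : A * f.leadingCoeff ^ 4 ≠ 0 := mul_ne_zero hA (pow_ne_zero 4 this)
    exact this hc
end
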